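/- For every integer k ≥ 2: (i) Γ(K_k × K_2) = k, and (ii) for all finite graphs G and H with Γ(G) = k and Γ(H) = 2, Γ(G × H) ≥ k. Consequently min{Γ(G × H) : Γ(G) = k and Γ(H) = 2} = k. -/

import Mathlib

open SimpleGraph

/-- A greedy `k`-coloring of `G`: a partition of the vertex set into nonempty stable sets
`S 0, …, S (k-1)` such that for all `j < i`, every vertex of `S i` has a neighbor in `S j`. -/
def IsGreedyColoring {V : Type*} (G : SimpleGraph V) (k : ℕ) (S : Fin k → Set V) : Prop :=
  (∀ v : V, ∃! i, v ∈ S i) ∧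
  (∀ i, (S i).Nonempty) ∧
  (∀ i, ∀ v ∈ S i, ∀ w ∈ S i, ¬ G.Adj v w) ∧
  (∀ i j : Fin k, j < i → ∀ v ∈ S i, ∃ w ∈ S j, G.Adj v w)

/-- The Grundy number `Γ(G)`: the largest `k` such that `G` has a greedy `k`-coloring. -/
noncomputable def grundy {V : Type*} [Fintype V] (G : SimpleGraph V) : ℕ :=
  sSup {k | ∃ S : Fin k → Set V, IsGreedyColoring G k S}

/-- Direct (tensor) product `G × H`: `(a,x)` adjacent to `(b,y)` iff
`ab ∈ E(G)` and `xy ∈ E(H)`. -/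
def tensorProd {α β : Type*} (G : SimpleGraph α) (H : SimpleGraph β) :
    SimpleGraph (α × β) where
  Adj x y := G.Adj x.1 y.1 ∧ H.Adj x.2 y.2
  symm := ⟨fun _ _ h => ⟨G.adj_symm h.1, H.adj_symm h.2⟩⟩
  loopless := ⟨fun _ h => G.loopless.irrefl _ h.1⟩

/-!
A vertex in the `i`-th class of a greedy coloring has neighbors in `i` distinct earlier classes,
so `Γ(G) ≤ Δ(G) + 1`; since `K_k × K_2` is `(k - 1)`-regular this gives `Γ(K_k × K_2) ≤ k`, and
coloring `(a, b)` by `a` attains it. For the lower bound, if `H` has an edge then a greedy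
coloring `c` of `G` lifts to `G × H`: color `(v, x)` by `c v` when `x` is not isolated in `H`,
and by the first color otherwise.
-/

namespace IsGreedyColoring

variable {V : Type*} {G : SimpleGraph V} {k : ℕ} {S : Fin k → Set V}

lemma of_color (c : V → Fin k) (hsurj : Function.Surjective c)
    (hproper : ∀ v w, G.Adj v w → c v ≠ c w)
    (hgreedy : ∀ v, ∀ j < c v, ∃ w, c w = j ∧ G.Adj v w) :
    IsGreedyColoring G k (fun i => {v | c v = i}) :=
  ⟨fun v => ⟨c v, rfl, fun _ h => h.symm⟩,
    fun i => hsurj i,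
    fun _ v hv w hw hvw => hproper v w hvw (hv.trans hw.symm),
    fun _ j hji v hv => hgreedy v j (hv ▸ hji)⟩

noncomputable def color (h : IsGreedyColoring G k S) (v : V) : Fin k :=
  (h.1 v).choose

lemma color_eq_iff (h : IsGreedyColoring G k S) {v : V} {i : Fin k} :
    h.color v = i ↔ v ∈ S i :=
  ⟨fun hi => hi ▸ (h.1 v).choose_spec.1, fun hv => ((h.1 v).choose_spec.2 i hv).symm⟩

lemma color_surjective (h : IsGreedyColoring G k S) : Function.Surjective h.color := fun i =>
  let ⟨v, hv⟩ := h.2.1 i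
  ⟨v, h.color_eq_iff.2 hv⟩

lemma color_ne_of_adj (h : IsGreedyColoring G k S) {v w : V} (hvw : G.Adj v w) :
    h.color v ≠ h.color w := fun hc =>
  h.2.2.1 _ v (h.color_eq_iff.1 rfl) w (h.color_eq_iff.1 hc.symm) hvw

lemma exists_adj_color_eq (h : IsGreedyColoring G k S) {v : V} {j : Fin k}
    (hj : j < h.color v) : ∃ w, h.color w = j ∧ G.Adj v w :=
  let ⟨w, hw, hvw⟩ := h.2.2.2 _ j hj v (h.color_eq_iff.1 rfl)
  ⟨w, h.color_eq_iff.2 hw, hvw⟩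

lemma le_degree [Fintype V] [DecidableRel G.Adj] (h : IsGreedyColoring G k S) {i : Fin k}
    {v : V} (hv : v ∈ S i) : (i : ℕ) ≤ G.degree v := by
  have hnbr : ∀ j : Fin i, ∃ w ∈ S (j.castLT (j.2.trans i.2)), G.Adj v w := fun j =>
    h.2.2.2 i _ j.2 v hv
  choose w hwS hvw using hnbr
  have hinj : Function.Injective w := fun j j' hjj' => by
    have := (h.color_eq_iff.2 (hwS j)).symm.trans (hjj' ▸ h.color_eq_iff.2 (hwS j'))
    exact Fin.ext (by simpa using congrArg Fin.val this)
  simpa using Finset.card_le_card_of_injOn (s := Finset.univ) w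
    (fun j _ => (G.mem_neighborFinset v _).2 (hvw j)) hinj.injOn

lemma card_le_of_forall_degree_lt [Fintype V] [DecidableRel G.Adj]
    (h : IsGreedyColoring G k S) {n : ℕ} (hdeg : ∀ v, G.degree v < n) : k ≤ n := by
  rcases Nat.eq_zero_or_pos k with rfl | hk
  · exact Nat.zero_le n
  obtain ⟨v, hv⟩ := h.2.1 ⟨k - 1, by omega⟩
  have : k - 1 < n := (h.le_degree hv).trans_lt (hdeg v)
  omega

end IsGreedyColoring

section Grundy

variable {V : Type*} [Fintype V] {G : SimpleGraph V}

lemma grundy_bddAbove (G : SimpleGraph V) :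
    BddAbove {k | ∃ S : Fin k → Set V, IsGreedyColoring G k S} := by
  classical
  exact ⟨Fintype.card V, fun _ ⟨_, hS⟩ => hS.card_le_of_forall_degree_lt G.degree_lt_card_verts⟩

lemma IsGreedyColoring.le_grundy {k : ℕ} {S : Fin k → Set V} (h : IsGreedyColoring G k S) :
    k ≤ grundy G :=
  le_csSup (grundy_bddAbove G) ⟨S, h⟩

lemma grundy_le_of_forall_degree_lt [DecidableRel G.Adj] {n : ℕ} (hdeg : ∀ v, G.degree v < n) :
    grundy G ≤ n :=
  csSup_le' fun _ ⟨_, hS⟩ => hS.card_le_of_forall_degree_lt hdeg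

lemma exists_isGreedyColoring_grundy (hG : 0 < grundy G) :
    ∃ S : Fin (grundy G) → Set V, IsGreedyColoring G (grundy G) S := by
  have hne : {k | ∃ S : Fin k → Set V, IsGreedyColoring G k S}.Nonempty := by
    by_contra hempty
    rw [Set.not_nonempty_iff_eq_empty] at hempty
    simp [grundy, hempty] at hG
  exact Nat.sSup_mem hne (grundy_bddAbove G)

lemma exists_adj_of_two_le_grundy (hG : 2 ≤ grundy G) : ∃ x y, G.Adj x y := by
  obtain ⟨S, hS⟩ := exists_isGreedyColoring_grundy (G := G) (by omega)
  obtain ⟨x, hx⟩ := hS.2.1 ⟨1, by omega⟩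
  obtain ⟨y, -, hxy⟩ := hS.2.2.2 ⟨1, by omega⟩ ⟨0, by omega⟩ (Fin.mk_lt_mk.2 zero_lt_one) x hx
  exact ⟨x, y, hxy⟩

lemma grundy_top : grundy (⊤ : SimpleGraph V) = Fintype.card V := by
  classical
  let e := Fintype.equivFin V
  refine le_antisymm (grundy_le_of_forall_degree_lt (⊤ : SimpleGraph V).degree_lt_card_verts) ?_
  refine (IsGreedyColoring.of_color (G := ⊤) e e.surjective (fun _ _ hvw => e.injective.ne hvw)
    fun v j hj => ⟨e.symm j, e.apply_symm_apply j, ?_⟩).le_grundy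
  rintro rfl
  simp at hj

end Grundy

section TensorProd

variable {α β : Type*} {G : SimpleGraph α} {H : SimpleGraph β}

instance [DecidableRel G.Adj] [DecidableRel H.Adj] : DecidableRel (tensorProd G H).Adj :=
  fun p q => inferInstanceAs (Decidable (G.Adj p.1 q.1 ∧ H.Adj p.2 q.2))

lemma degree_tensorProd [Fintype α] [Fintype β] [DecidableRel G.Adj] [DecidableRel H.Adj]
    (a : α) (b : β) : (tensorProd G H).degree (a, b) = G.degree a * H.degree b := by
  simp only [← card_neighborFinset_eq_degree, ← Finset.card_product]
  congr 1
  ext ⟨c, d⟩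
  simp only [Finset.mem_product, mem_neighborFinset]
  rfl

lemma grundy_le_grundy_tensorProd [Fintype α] [Fintype β] (hH : ∃ x y, H.Adj x y) :
    grundy G ≤ grundy (tensorProd G H) := by
  rcases Nat.eq_zero_or_pos (grundy G) with hG | hG
  · exact hG ▸ Nat.zero_le _
  obtain ⟨S, hS⟩ := exists_isGreedyColoring_grundy hG
  have : NeZero (grundy G) := ⟨hG.ne'⟩
  classical
  let c : α × β → Fin (grundy G) := fun p => if ∃ y, H.Adj p.2 y then hS.color p.1 else 0
  have hc : ∀ v x y, H.Adj x y → c (v, x) = hS.color v := fun _ _ y hxy => if_pos ⟨y, hxy⟩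
  refine (IsGreedyColoring.of_color c ?surj ?proper ?greedy).le_grundy
  case surj =>
    obtain ⟨x, y, hxy⟩ := hH
    intro i
    obtain ⟨v, hv⟩ := hS.color_surjective i
    exact ⟨(v, x), (hc v x y hxy).trans hv⟩
  case proper =>
    rintro ⟨v, x⟩ ⟨w, y⟩ ⟨hvw, hxy⟩
    rw [hc v x y hxy, hc w y x hxy.symm]
    exact hS.color_ne_of_adj hvw
  case greedy =>
    rintro ⟨v, x⟩ j hj
    by_cases hx : ∃ y, H.Adj x y
    · obtain ⟨y, hxy⟩ := hx
      rw [hc v x y hxy] at hj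
      obtain ⟨w, hw, hvw⟩ := hS.exists_adj_color_eq hj
      exact ⟨(w, y), (hc w y x hxy.symm).trans hw, hvw, hxy⟩
    · rw [show c (v, x) = 0 from if_neg hx] at hj
      exact absurd hj (Fin.not_lt_zero j)

lemma grundy_tensorProd_top_fin_two (k : ℕ) :
    grundy (tensorProd (⊤ : SimpleGraph (Fin k)) (⊤ : SimpleGraph (Fin 2))) = k := by
  refine le_antisymm (grundy_le_of_forall_degree_lt fun p => ?_) ?_
  · rw [degree_tensorProd]
    simpa only [complete_graph_degree, Fintype.card_fin, Nat.add_one_sub_one, mul_one,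
      tsub_lt_self_iff, Order.lt_one_iff, and_true] using p.1.pos
  · have hne : ∀ b : Fin 2, b ≠ b + 1 := by decide
    exact (IsGreedyColoring.of_color
      (G := tensorProd (⊤ : SimpleGraph (Fin k)) (⊤ : SimpleGraph (Fin 2))) Prod.fst
      (fun i => ⟨(i, 0), rfl⟩) (fun _ _ hpq => hpq.1)
      fun p j hj => ⟨(j, p.2 + 1), rfl, hj.ne', hne p.2⟩).le_grundy

end TensorProd

theorem grundy_tensorProd_min_general (k : ℕ) :
    grundy (tensorProd (⊤ : SimpleGraph (Fin k)) (⊤ : SimpleGraph (Fin 2))) = k ∧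
    (∀ {α β : Type} [Fintype α] [Fintype β] (G : SimpleGraph α) (H : SimpleGraph β),
      grundy G = k → grundy H = 2 → grundy (tensorProd G H) ≥ k) ∧
    IsLeast {m : ℕ | ∃ (α β : Type) (instα : Fintype α) (instβ : Fintype β)
      (G : SimpleGraph α) (H : SimpleGraph β),
      @grundy α instα G = k ∧ @grundy β instβ H = 2 ∧
      @grundy (α × β) (@instFintypeProd α β instα instβ) (tensorProd G H) = m} k := by
  have hcrown := grundy_tensorProd_top_fin_two k
  have hlower : ∀ {α β : Type} [Fintype α] [Fintype β] (G : SimpleGraph α) (H : SimpleGraph β),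
      grundy G = k → grundy H = 2 → grundy (tensorProd G H) ≥ k := fun G H hG hH =>
    hG ▸ grundy_le_grundy_tensorProd (exists_adj_of_two_le_grundy hH.ge)
  refine ⟨hcrown, hlower, ⟨Fin k, Fin 2, _, _, ⊤, ⊤, by simp [grundy_top], by simp [grundy_top],
    hcrown⟩, ?_⟩
  rintro m ⟨α, β, _, _, G, H, hG, hH, rfl⟩
  exact hlower G H hG hH

/-- For every `k ≥ 2`: (i) `Γ(K_k × K_2) = k`; (ii) for all finite graphs `G`, `H` with
`Γ(G) = k` and `Γ(H) = 2`, `Γ(G × H) ≥ k`.  Consequently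
`min {Γ(G × H) : Γ(G) = k, Γ(H) = 2} = k`. -/
theorem grundy_tensorProd_min (k : ℕ) (hk : 2 ≤ k) :
    grundy (tensorProd (⊤ : SimpleGraph (Fin k)) (⊤ : SimpleGraph (Fin 2))) = k ∧
    (∀ {α β : Type} [Fintype α] [Fintype β] (G : SimpleGraph α) (H : SimpleGraph β),
      grundy G = k → grundy H = 2 → grundy (tensorProd G H) ≥ k) ∧
    IsLeast {m : ℕ | ∃ (α β : Type) (instα : Fintype α) (instβ : Fintype β)
      (G : SimpleGraph α) (H : SimpleGraph β),
      @grundy α instα G = k ∧ @grundy β instβ H = 2 ∧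
      @grundy (α × β) (@instFintypeProd α β instα instβ) (tensorProd G H) = m} k :=
  grundy_tensorProd_min_general k
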